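/- Let (e_1, …, e_m; f_1, …, f_m) be a hyperbolic family in the complex quadratic space (V, Q), and let x = ∑_{j=1}^{m−1} ι(e_{j+1})ι(f_j) ∈ C(V,Q). For θ ∈ ℝ define g(θ) = ∏_{j=1}^m ( cos(θ/2)·1 + i·sin(θ/2)·(1 − ι(e_j)ι(f_j)) ) (the factors pairwise commute). Then: (a) g(θ) ∈ spinGroup Q for every θ ∈ ℝ; (b) g(θ)·x = x·g(θ) for every θ ∈ ℝ; (c) g(0) = 1; (d) g(2π) = (−1)^m · 1. In particular, when m = 2k+1 is odd, g is a one-parameter family inside the centralizer of x in the spin group with g(0) = 1 and g(2π) = −1, so −1 lies in the path component of 1 in that centralizer. -/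

import Mathlib

open CliffordAlgebra

/-- A hyperbolic family `(e₁, …, e_m; f₁, …, f_m)` in the quadratic space `(V, Q)`:
isotropic vectors with `polar Q (e i) (f j) = 2·δ_{ij}` and all other polar pairings zero. -/
def IsHyperbolicFamily {V : Type*} [AddCommGroup V] [Module ℂ V]
    (Q : QuadraticForm ℂ V) {m : ℕ} (e f : Fin m → V) : Prop :=
  (∀ j, Q (e j) = 0) ∧ (∀ j, Q (f j) = 0) ∧
    (∀ i j, QuadraticMap.polar (⇑Q) (e i) (f j) = if i = j then 2 else 0) ∧
    (∀ i j, QuadraticMap.polar (⇑Q) (e i) (e j) = 0) ∧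
    (∀ i j, QuadraticMap.polar (⇑Q) (f i) (f j) = 0)

/-- A hyperbolic basis: a hyperbolic family which is a basis of `V`. -/
def IsHyperbolicBasis {V : Type*} [AddCommGroup V] [Module ℂ V]
    (Q : QuadraticForm ℂ V) {m : ℕ} (e f : Fin m → V) : Prop :=
  IsHyperbolicFamily Q e f ∧ ∃ b : Module.Basis (Fin m ⊕ Fin m) ℂ V, ⇑b = Sum.elim e f

/-- The element `ℰ = iⁿ · ∏ⱼ (1 − ι(eⱼ)ι(fⱼ))` of the Clifford algebra. -/
noncomputable def cliffordCenterE {V : Type*} [AddCommGroup V] [Module ℂ V]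
    (Q : QuadraticForm ℂ V) {n : ℕ} (e f : Fin n → V) : CliffordAlgebra Q :=
  Complex.I ^ n • (List.ofFn fun j => (1 : CliffordAlgebra Q) - ι Q (e j) * ι Q (f j)).prod

section Aux
variable {V : Type*} [AddCommGroup V] [Module ℂ V] {Q : QuadraticForm ℂ V}

theorem aux_anti {a b : V} (h : QuadraticMap.polar (⇑Q) a b = 0) :
    ι Q a * ι Q b = -(ι Q b * ι Q a) := by
  have h2 := ι_mul_ι_add_swap (Q := Q) a b
  rw [h, map_zero] at h2
  exact eq_neg_of_add_eq_zero_left h2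

theorem aux_swap2 {a b : V} (h : QuadraticMap.polar (⇑Q) a b = (2:ℂ)) :
    ι Q b * ι Q a = 2 - ι Q a * ι Q b := by
  have h2 := ι_mul_ι_add_swap (Q := Q) a b
  rw [h, map_ofNat] at h2
  exact eq_sub_of_add_eq' h2

theorem aux_sq0 {a : V} (h : Q a = 0) : ι Q a * ι Q a = 0 := by
  rw [ι_sq_scalar, h, map_zero]

theorem aux_mid (A B C D E : CliffordAlgebra Q) (h : B * C = E) :
    A * B * (C * D) = A * E * D := by
  rw [mul_assoc A B, ← mul_assoc B C D, h, ← mul_assoc]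

-- (ab)(xy) with b anticommuting x, and all disjoint: commute
theorem aux_disjoint_comm {a b x y : V}
    (h1 : QuadraticMap.polar (⇑Q) a x = 0) (h2 : QuadraticMap.polar (⇑Q) a y = 0)
    (h3 : QuadraticMap.polar (⇑Q) b x = 0) (h4 : QuadraticMap.polar (⇑Q) b y = 0) :
    (ι Q a * ι Q b) * (ι Q x * ι Q y) = (ι Q x * ι Q y) * (ι Q a * ι Q b) := by
  calc ι Q a * ι Q b * (ι Q x * ι Q y)
      = ι Q a * -(ι Q x * ι Q b) * ι Q y := aux_mid _ _ _ _ _ (aux_anti h3)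
    _ = -(ι Q a * ι Q x * (ι Q b * ι Q y)) := by noncomm_ring
    _ = -(-(ι Q x * ι Q a) * -(ι Q y * ι Q b)) := by rw [aux_anti h1, aux_anti h4]
    _ = -(ι Q x * (ι Q a * ι Q y) * ι Q b) := by noncomm_ring
    _ = -(ι Q x * -(ι Q y * ι Q a) * ι Q b) := by rw [aux_anti h2]
    _ = (ι Q x * ι Q y) * (ι Q a * ι Q b) := by noncomm_ring

-- u*u = 2u
theorem aux_usq {a b : V} (ha : Q a = 0) (hb : Q b = 0)
    (hab : QuadraticMap.polar (⇑Q) a b = (2:ℂ)) :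
    (ι Q a * ι Q b) * (ι Q a * ι Q b) = 2 * (ι Q a * ι Q b) := by
  calc ι Q a * ι Q b * (ι Q a * ι Q b)
      = ι Q a * (2 - ι Q a * ι Q b) * ι Q b := aux_mid _ _ _ _ _ (aux_swap2 hab)
    _ = 2 * (ι Q a * ι Q b) - (ι Q a * ι Q a) * (ι Q b * ι Q b) := by noncomm_ring
    _ = 2 * (ι Q a * ι Q b) := by rw [aux_sq0 ha, zero_mul, sub_zero]

theorem aux_A_sq {a b : V} (ha : Q a = 0) (hb : Q b = 0)
    (hab : QuadraticMap.polar (⇑Q) a b = (2:ℂ)) :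
    (1 - ι Q a * ι Q b) * (1 - ι Q a * ι Q b) = 1 := by
  have h := aux_usq (Q := Q) ha hb
  calc (1 - ι Q a * ι Q b) * (1 - ι Q a * ι Q b)
      = 1 - 2 * (ι Q a * ι Q b) + (ι Q a * ι Q b) * (ι Q a * ι Q b) := by noncomm_ring
    _ = 1 := by rw [aux_usq ha hb hab]; noncomm_ring

-- u_j y = 0 : (ab)(xb) = 0 when b anticommutes x, b² = 0
theorem aux_uy0 {a b x : V} (hb : Q b = 0) (hbx : QuadraticMap.polar (⇑Q) b x = 0) :
    (ι Q a * ι Q b) * (ι Q x * ι Q b) = 0 := by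
  calc ι Q a * ι Q b * (ι Q x * ι Q b)
      = ι Q a * -(ι Q x * ι Q b) * ι Q b := aux_mid _ _ _ _ _ (aux_anti hbx)
    _ = -(ι Q a * ι Q x * (ι Q b * ι Q b)) := by noncomm_ring
    _ = 0 := by rw [aux_sq0 hb, mul_zero, neg_zero]

-- y u_j = 2y : (xb)(ab) with polar a b = 2, b² = 0
theorem aux_yu2 {a b x : V} (hb : Q b = 0)
    (hab : QuadraticMap.polar (⇑Q) a b = (2:ℂ)) :
    (ι Q x * ι Q b) * (ι Q a * ι Q b) = 2 * (ι Q x * ι Q b) := by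
  calc ι Q x * ι Q b * (ι Q a * ι Q b)
      = ι Q x * (2 - ι Q a * ι Q b) * ι Q b := aux_mid _ _ _ _ _ (aux_swap2 hab)
    _ = 2 * (ι Q x * ι Q b) - (ι Q x * ι Q a) * (ι Q b * ι Q b) := by noncomm_ring
    _ = 2 * (ι Q x * ι Q b) := by rw [aux_sq0 hb, mul_zero, sub_zero]

-- u_{j'} y = 2y : (ab)(ax) with polar a b = 2, a² = 0
theorem aux_u'y2 {a b x : V} (ha : Q a = 0)
    (hab : QuadraticMap.polar (⇑Q) a b = (2:ℂ)) :
    (ι Q a * ι Q b) * (ι Q a * ι Q x) = 2 * (ι Q a * ι Q x) := by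
  calc ι Q a * ι Q b * (ι Q a * ι Q x)
      = ι Q a * (2 - ι Q a * ι Q b) * ι Q x := aux_mid _ _ _ _ _ (aux_swap2 hab)
    _ = 2 * (ι Q a * ι Q x) - (ι Q a * ι Q a) * (ι Q b * ι Q x) := by noncomm_ring
    _ = 2 * (ι Q a * ι Q x) := by rw [aux_sq0 ha, zero_mul, sub_zero]

-- y * u_{j'} = (a x)(a b) with x anticommuting a, a² = 0
theorem aux_yu'0 {a b x : V} (ha : Q a = 0) (hxa : QuadraticMap.polar (⇑Q) x a = 0) :
    (ι Q a * ι Q x) * (ι Q a * ι Q b) = 0 := by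
  calc ι Q a * ι Q x * (ι Q a * ι Q b)
      = ι Q a * -(ι Q a * ι Q x) * ι Q b := aux_mid _ _ _ _ _ (aux_anti hxa)
    _ = -(ι Q a * ι Q a * (ι Q x * ι Q b)) := by noncomm_ring
    _ = 0 := by rw [aux_sq0 ha, zero_mul, neg_zero]

end Aux

section Fam
variable {V : Type*} [AddCommGroup V] [Module ℂ V] {Q : QuadraticForm ℂ V}
variable {m : ℕ} {e f : Fin m → V}

/-- The factor of the one-parameter family. -/
noncomputable def hypF (Q : QuadraticForm ℂ V) (e f : Fin m → V) (c s : ℂ) (k : Fin m) :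
    CliffordAlgebra Q :=
  c • 1 + s • ((1 : CliffordAlgebra Q) - ι Q (e k) * ι Q (f k))

variable (hef : IsHyperbolicFamily Q e f) (c s : ℂ)
include hef

theorem hypF_pef (i k : Fin m) (h : i ≠ k) :
    QuadraticMap.polar (⇑Q) (e i) (f k) = 0 := by
  rw [hef.2.2.1, if_neg h]

theorem hypF_pfe (i k : Fin m) (h : k ≠ i) :
    QuadraticMap.polar (⇑Q) (f i) (e k) = 0 := by
  rw [QuadraticMap.polar_comm, hef.2.2.1, if_neg h]

theorem hypF_pef2 (k : Fin m) : QuadraticMap.polar (⇑Q) (e k) (f k) = (2:ℂ) := by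
  rw [hef.2.2.1, if_pos rfl]

theorem hypF_u_comm {i k : Fin m} (h : i ≠ k) :
    (ι Q (e i) * ι Q (f i)) * (ι Q (e k) * ι Q (f k)) =
      (ι Q (e k) * ι Q (f k)) * (ι Q (e i) * ι Q (f i)) :=
  aux_disjoint_comm (hef.2.2.2.1 i k) (hypF_pef hef i k h)
    (hypF_pfe hef i k (Ne.symm h)) (hef.2.2.2.2 i k)

theorem hypF_comm (i k : Fin m) : Commute (hypF Q e f c s i) (hypF Q e f c s k) := by
  rcases eq_or_ne i k with rfl | h
  · rfl
  · have hu : Commute (ι Q (e i) * ι Q (f i)) (ι Q (e k) * ι Q (f k)) := hypF_u_comm hef h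
    unfold hypF
    have h1 : Commute ((1:CliffordAlgebra Q) - ι Q (e i) * ι Q (f i))
        (1 - ι Q (e k) * ι Q (f k)) :=
      Commute.sub_left (Commute.one_left _) ((Commute.one_right _).sub_right hu)
    have hc1 : ∀ x : CliffordAlgebra Q, Commute (c • 1) x := fun x =>
      (Commute.one_left x).smul_left c
    exact (hc1 _).add_left (((hc1 _).symm).add_right ((h1.smul_left s).smul_right s))

variable {j j' : Fin m} (hne : j' ≠ j)
include hne

theorem hypFy_j : hypF Q e f c s j * (ι Q (e j') * ι Q (f j)) =
    (c + s) • (ι Q (e j') * ι Q (f j)) := by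
  have h : (ι Q (e j) * ι Q (f j)) * (ι Q (e j') * ι Q (f j)) = 0 :=
    aux_uy0 (hef.2.1 j) (hypF_pfe hef j j' hne)
  unfold hypF
  rw [add_mul, smul_mul_assoc, one_mul, smul_mul_assoc, sub_mul, one_mul, h, sub_zero,
    ← add_smul]

theorem hypyF_j : (ι Q (e j') * ι Q (f j)) * hypF Q e f c s j =
    (c - s) • (ι Q (e j') * ι Q (f j)) := by
  have h : (ι Q (e j') * ι Q (f j)) * (ι Q (e j) * ι Q (f j)) =
      2 * (ι Q (e j') * ι Q (f j)) := aux_yu2 (hef.2.1 j) (hypF_pef2 hef j)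
  have h2 : ∀ z : CliffordAlgebra Q, z - 2 * z = -z := fun z => by noncomm_ring
  unfold hypF
  rw [mul_add, mul_smul_comm, mul_one, mul_smul_comm, mul_sub, mul_one, h, h2, smul_neg,
    ← sub_eq_add_neg, ← sub_smul]

theorem hypFy_j' : hypF Q e f c s j' * (ι Q (e j') * ι Q (f j)) =
    (c - s) • (ι Q (e j') * ι Q (f j)) := by
  have h : (ι Q (e j') * ι Q (f j')) * (ι Q (e j') * ι Q (f j)) =
      2 * (ι Q (e j') * ι Q (f j)) := aux_u'y2 (hef.1 j') (hypF_pef2 hef j')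
  have h2 : ∀ z : CliffordAlgebra Q, z - 2 * z = -z := fun z => by noncomm_ring
  unfold hypF
  rw [add_mul, smul_mul_assoc, one_mul, smul_mul_assoc, sub_mul, one_mul, h, h2, smul_neg,
    ← sub_eq_add_neg, ← sub_smul]

theorem hypyF_j' : (ι Q (e j') * ι Q (f j)) * hypF Q e f c s j' =
    (c + s) • (ι Q (e j') * ι Q (f j)) := by
  have h : (ι Q (e j') * ι Q (f j)) * (ι Q (e j') * ι Q (f j')) = 0 :=
    aux_yu'0 (hef.1 j') (hypF_pfe hef j j' hne)
  unfold hypF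
  rw [mul_add, mul_smul_comm, mul_one, mul_smul_comm, mul_sub, mul_one, h, sub_zero,
    ← add_smul]

omit hne in
theorem hypFy_other {k : Fin m} (h1 : k ≠ j) (h2 : k ≠ j') :
    Commute (hypF Q e f c s k) (ι Q (e j') * ι Q (f j)) := by
  have hu : Commute (ι Q (e k) * ι Q (f k)) (ι Q (e j') * ι Q (f j)) :=
    aux_disjoint_comm (hef.2.2.2.1 k j') (hypF_pef hef k j h1)
      (hypF_pfe hef k j' (Ne.symm h2)) (hef.2.2.2.2 k j)
  unfold hypF
  exact ((Commute.one_left _).smul_left c).add_left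
    (((Commute.one_left _).sub_left hu).smul_left s)

theorem hyp_swap (k : Fin m) :
    hypF Q e f c s k * (ι Q (e j') * ι Q (f j)) =
      (ι Q (e j') * ι Q (f j)) * hypF Q e f c s (Equiv.swap j j' k) := by
  rcases eq_or_ne k j with rfl | h1
  · rw [Equiv.swap_apply_left, hypFy_j hef c s hne, hypyF_j' hef c s hne]
  rcases eq_or_ne k j' with rfl | h2
  · rw [Equiv.swap_apply_right, hypFy_j' hef c s hne, hypyF_j hef c s hne]
  · rw [Equiv.swap_apply_of_ne_of_ne h1 h2]
    exact (hypFy_other hef c s h1 h2).eq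

theorem hyp_list (l : List (Fin m)) :
    (l.map (hypF Q e f c s)).prod * (ι Q (e j') * ι Q (f j)) =
      (ι Q (e j') * ι Q (f j)) *
        (l.map fun k => hypF Q e f c s (Equiv.swap j j' k)).prod := by
  induction l with
  | nil => simp
  | cons k l ih =>
    simp only [List.map_cons, List.prod_cons]
    calc hypF Q e f c s k * (l.map (hypF Q e f c s)).prod * (ι Q (e j') * ι Q (f j))
        = hypF Q e f c s k * ((l.map (hypF Q e f c s)).prod * (ι Q (e j') * ι Q (f j))) := mul_assoc _ _ _
      _ = hypF Q e f c s k * ((ι Q (e j') * ι Q (f j)) *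
            (l.map fun k => hypF Q e f c s (Equiv.swap j j' k)).prod) := by rw [ih]
      _ = (hypF Q e f c s k * (ι Q (e j') * ι Q (f j))) *
            (l.map fun k => hypF Q e f c s (Equiv.swap j j' k)).prod := (mul_assoc _ _ _).symm
      _ = ((ι Q (e j') * ι Q (f j)) * hypF Q e f c s (Equiv.swap j j' k)) *
            (l.map fun k => hypF Q e f c s (Equiv.swap j j' k)).prod := by
          rw [hyp_swap hef c s hne]
      _ = _ := mul_assoc _ _ _

omit hne in
theorem hyp_prod_swap :
    (List.ofFn fun k => hypF Q e f c s (Equiv.swap j j' k)).prod =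
      (List.ofFn (hypF Q e f c s)).prod :=
  List.Perm.prod_eq'
    ((Equiv.swap j j').ofFn_comp_perm (hypF Q e f c s))
    (List.pairwise_ofFn.mpr fun a b _ => hypF_comm hef c s _ _)

theorem hyp_g_comm :
    (List.ofFn (hypF Q e f c s)).prod * (ι Q (e j') * ι Q (f j)) =
      (ι Q (e j') * ι Q (f j)) * (List.ofFn (hypF Q e f c s)).prod := by
  rw [List.ofFn_eq_map, hyp_list hef c s hne, ← List.ofFn_eq_map,
    show (List.ofFn fun k => hypF Q e f c s (Equiv.swap j j' k)) =
      List.ofFn (hypF Q e f c s ∘ Equiv.swap j j') from rfl,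
    show (hypF Q e f c s ∘ Equiv.swap j j') = fun k => hypF Q e f c s (Equiv.swap j j' k)
      from rfl,
    hyp_prod_swap hef c s, List.ofFn_eq_map]

omit hne

omit hef in
theorem aux_two_smul_one : ((2:ℂ) • (1:CliffordAlgebra Q)) = 2 := by
  rw [← Algebra.algebraMap_eq_smul_one, map_ofNat]

theorem hyp_a_sq (k : Fin m) :
    ι Q (e k + f k) * ι Q (e k + f k) = (2:ℂ) • (1:CliffordAlgebra Q) := by
  rw [map_add, add_mul, mul_add, mul_add, aux_sq0 (hef.1 k), aux_sq0 (hef.2.1 k),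
    aux_swap2 (hypF_pef2 hef k), aux_two_smul_one]
  noncomm_ring

theorem hyp_w_sq (hcs : c * c - s * s = 1) (k : Fin m) :
    ι Q (((c+s)/2) • e k + ((c-s)/2) • f k) *
      ι Q (((c+s)/2) • e k + ((c-s)/2) • f k) = ((1:ℂ)/2) • (1:CliffordAlgebra Q) := by
  simp only [map_add, map_smul]
  simp only [add_mul, mul_add, smul_mul_assoc, mul_smul_comm]
  rw [aux_sq0 (hef.1 k), aux_sq0 (hef.2.1 k), aux_swap2 (hypF_pef2 hef k),
    ← aux_two_smul_one]
  match_scalars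
  · linear_combination ((1:ℂ)/2) * hcs
  · ring

theorem hyp_aw (k : Fin m) :
    ι Q (e k + f k) * ι Q (((c+s)/2) • e k + ((c-s)/2) • f k) = hypF Q e f c s k := by
  simp only [map_add, map_smul]
  simp only [add_mul, mul_add, smul_mul_assoc, mul_smul_comm]
  rw [aux_sq0 (hef.1 k), aux_sq0 (hef.2.1 k), aux_swap2 (hypF_pef2 hef k),
    ← aux_two_smul_one]
  unfold hypF
  module

theorem hyp_star (k : Fin m) :
    star (hypF Q e f c s k) =
      c • 1 - s • ((1:CliffordAlgebra Q) - ι Q (e k) * ι Q (f k)) := by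
  unfold hypF
  rw [star_add, CliffordAlgebra.star_smul, CliffordAlgebra.star_smul, star_one, star_sub,
    star_one, star_mul, CliffordAlgebra.star_ι, CliffordAlgebra.star_ι, neg_mul_neg,
    aux_swap2 (hypF_pef2 hef k), ← aux_two_smul_one]
  module

omit hef in
theorem aux_unit_mul {A : CliffordAlgebra Q} (hA : A * A = 1) (hcs : c * c - s * s = 1) :
    (c • 1 - s • A) * (c • 1 + s • A) = 1 ∧ (c • 1 + s • A) * (c • 1 - s • A) = 1 := by
  constructor <;>
  · simp only [sub_mul, mul_add, add_mul, mul_sub, smul_mul_assoc, mul_smul_comm, one_mul,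
      mul_one, smul_smul, hA]
    match_scalars
    · linear_combination hcs
    · ring

theorem hypF_unitary (hcs : c * c - s * s = 1) (k : Fin m) :
    hypF Q e f c s k ∈ unitary (CliffordAlgebra Q) := by
  have hA : ((1:CliffordAlgebra Q) - ι Q (e k) * ι Q (f k)) *
      ((1:CliffordAlgebra Q) - ι Q (e k) * ι Q (f k)) = 1 :=
    aux_A_sq (hef.1 k) (hef.2.1 k) (hypF_pef2 hef k)
  rw [Unitary.mem_iff, hyp_star hef c s k]
  exact ⟨(aux_unit_mul c s hA hcs).1, (aux_unit_mul c s hA hcs).2⟩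

theorem hypF_even (k : Fin m) : hypF Q e f c s k ∈ even Q := by
  have hu : (ι Q (e k) * ι Q (f k)) ∈ even Q := ι_mul_ι_mem_evenOdd_zero Q _ _
  exact add_mem (Subalgebra.smul_mem _ (one_mem _) c)
    (Subalgebra.smul_mem _ (sub_mem (one_mem _) hu) s)

noncomputable def hypUa (k : Fin m) : (CliffordAlgebra Q)ˣ where
  val := ι Q (e k + f k)
  inv := ((1:ℂ)/2) • ι Q (e k + f k)
  val_inv := by
    rw [mul_smul_comm, hyp_a_sq hef k, smul_smul]; norm_num
  inv_val := by
    rw [smul_mul_assoc, hyp_a_sq hef k, smul_smul]; norm_num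

noncomputable def hypUw (hcs : c * c - s * s = 1) (k : Fin m) : (CliffordAlgebra Q)ˣ where
  val := ι Q (((c+s)/2) • e k + ((c-s)/2) • f k)
  inv := (2:ℂ) • ι Q (((c+s)/2) • e k + ((c-s)/2) • f k)
  val_inv := by
    rw [mul_smul_comm, hyp_w_sq hef c s hcs k, smul_smul]; norm_num
  inv_val := by
    rw [smul_mul_assoc, hyp_w_sq hef c s hcs k, smul_smul]; norm_num

theorem hypF_spin (hcs : c * c - s * s = 1) (k : Fin m) :
    hypF Q e f c s k ∈ spinGroup Q := by
  refine ⟨⟨⟨hypUa hef k * hypUw hef c s hcs k, ?_, ?_⟩, hypF_unitary hef c s hcs k⟩,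
    hypF_even hef c s k⟩
  · exact mul_mem (Subgroup.subset_closure ⟨e k + f k, rfl⟩)
      (Subgroup.subset_closure ⟨((c+s)/2) • e k + ((c-s)/2) • f k, rfl⟩)
  · exact hyp_aw hef c s k

theorem hyp_g_spin (hcs : c * c - s * s = 1) :
    (List.ofFn (hypF Q e f c s)).prod ∈ spinGroup Q := by
  refine list_prod_mem fun x hx => ?_
  obtain ⟨k, rfl⟩ := List.mem_ofFn.mp hx
  exact hypF_spin hef c s hcs k

end Fam

/-- The one-parameter family `g(θ) = ∏ⱼ (cos(θ/2) + i·sin(θ/2)·(1 − ι(eⱼ)ι(fⱼ)))` lies in the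
spin group, commutes with the nilpotent `x = ∑ ι(e_{j+1})ι(fⱼ)`, and satisfies `g(0) = 1`,
`g(2π) = (−1)^m`. -/
theorem spin_one_parameter_family {V : Type*} [AddCommGroup V] [Module ℂ V]
    (Q : QuadraticForm ℂ V) {m : ℕ} (e f : Fin m → V)
    (hef : IsHyperbolicFamily Q e f) :
    (∀ θ : ℝ,
      (List.ofFn fun j : Fin m =>
          ((Real.cos (θ / 2) : ℂ) • (1 : CliffordAlgebra Q) +
            (Complex.I * (Real.sin (θ / 2) : ℂ)) •
              ((1 : CliffordAlgebra Q) - ι Q (e j) * ι Q (f j)))).prod ∈ spinGroup Q) ∧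
    (∀ θ : ℝ,
      (List.ofFn fun j : Fin m =>
          ((Real.cos (θ / 2) : ℂ) • (1 : CliffordAlgebra Q) +
            (Complex.I * (Real.sin (θ / 2) : ℂ)) •
              ((1 : CliffordAlgebra Q) - ι Q (e j) * ι Q (f j)))).prod *
          (∑ j : Fin m, if h : (j : ℕ) + 1 < m then ι Q (e ⟨(j : ℕ) + 1, h⟩) * ι Q (f j) else 0) =
        (∑ j : Fin m, if h : (j : ℕ) + 1 < m then ι Q (e ⟨(j : ℕ) + 1, h⟩) * ι Q (f j) else 0) *
          (List.ofFn fun j : Fin m =>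
            ((Real.cos (θ / 2) : ℂ) • (1 : CliffordAlgebra Q) +
              (Complex.I * (Real.sin (θ / 2) : ℂ)) •
                ((1 : CliffordAlgebra Q) - ι Q (e j) * ι Q (f j)))).prod) ∧
    (List.ofFn fun j : Fin m =>
        ((Real.cos ((0 : ℝ) / 2) : ℂ) • (1 : CliffordAlgebra Q) +
          (Complex.I * (Real.sin ((0 : ℝ) / 2) : ℂ)) •
            ((1 : CliffordAlgebra Q) - ι Q (e j) * ι Q (f j)))).prod = 1 ∧
    (List.ofFn fun j : Fin m =>
        ((Real.cos ((2 * Real.pi) / 2) : ℂ) • (1 : CliffordAlgebra Q) +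
          (Complex.I * (Real.sin ((2 * Real.pi) / 2) : ℂ)) •
            ((1 : CliffordAlgebra Q) - ι Q (e j) * ι Q (f j)))).prod =
      ((-1 : ℂ) ^ m) • (1 : CliffordAlgebra Q) := by
  have hcs : ∀ t : ℝ, (Real.cos t : ℂ) * (Real.cos t : ℂ) -
      (Complex.I * (Real.sin t : ℂ)) * (Complex.I * (Real.sin t : ℂ)) = 1 := by
    intro t
    have h := Real.sin_sq_add_cos_sq t
    have h' : ((Real.sin t : ℂ)) ^ 2 + ((Real.cos t : ℂ)) ^ 2 = 1 := by exact_mod_cast h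
    linear_combination h' - ((Real.sin t : ℂ)) ^ 2 * Complex.I_sq
  refine ⟨?_, ?_, ?_, ?_⟩
  · intro θ
    exact hyp_g_spin hef _ _ (hcs (θ / 2))
  · intro θ
    rw [Finset.mul_sum, Finset.sum_mul]
    refine Finset.sum_congr rfl fun j _ => ?_
    by_cases h : (j : ℕ) + 1 < m
    · rw [dif_pos h]
      exact hyp_g_comm hef _ _ (Fin.ne_of_val_ne (Nat.succ_ne_self _))
    · rw [dif_neg h, mul_zero, zero_mul]
  · have h0 : (fun j : Fin m =>
        ((Real.cos ((0 : ℝ) / 2) : ℂ) • (1 : CliffordAlgebra Q) +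
          (Complex.I * (Real.sin ((0 : ℝ) / 2) : ℂ)) •
            ((1 : CliffordAlgebra Q) - ι Q (e j) * ι Q (f j)))) =
        fun _ => (1 : CliffordAlgebra Q) := by
      funext j
      norm_num
    rw [h0, List.ofFn_const, List.prod_replicate, one_pow]
  · have h1 : (fun j : Fin m =>
        ((Real.cos ((2 * Real.pi) / 2) : ℂ) • (1 : CliffordAlgebra Q) +
          (Complex.I * (Real.sin ((2 * Real.pi) / 2) : ℂ)) •
            ((1 : CliffordAlgebra Q) - ι Q (e j) * ι Q (f j)))) =
        fun _ => (-1 : ℂ) • (1 : CliffordAlgebra Q) := by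
      funext j
      rw [show (2 * Real.pi) / 2 = Real.pi by ring, Real.cos_pi, Real.sin_pi]
      norm_num
    rw [h1, List.ofFn_const, List.prod_replicate, smul_pow, one_pow]
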